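/- If a graph G has a cut-vertex, then G does not have two completely independent spanning trees. -/

import Mathlib

/-!
For `u, w ≠ v`, the paths from `u` to `w` in two completely independent spanning trees are
internally vertex-disjoint, so at least one of them avoids `v`; thus `G - v` stays connected.
-/

open SimpleGraph

def crossSubgraph {V : Type*} (G : SimpleGraph V) (A B : Set V) : SimpleGraph V where
  Adj a b := G.Adj a b ∧ ((a ∈ A ∧ b ∈ B) ∨ (a ∈ B ∧ b ∈ A))
  symm := by
    constructor
    rintro a b ⟨h, hc | hc⟩
    · exact ⟨h.symm, Or.inr ⟨hc.2, hc.1⟩⟩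
    · exact ⟨h.symm, Or.inl ⟨hc.2, hc.1⟩⟩
  loopless := ⟨fun a h => G.loopless.irrefl a h.1⟩

/-- Every component of `H` that contains an edge also contains a cycle
    (i.e. `H`, viewed as the edge-induced subgraph, has no tree component). -/
def NoTreeComponent {V : Type*} (H : SimpleGraph V) : Prop :=
  ∀ v : V, (∃ w, H.Adj v w) →
    ∃ w, H.Reachable v w ∧ ∃ c : H.Walk w w, c.IsCycle

def IsCIST2Partition {V : Type*} (G : SimpleGraph V) (A B : Set V) : Prop :=
  A ∪ B = Set.univ ∧ Disjoint A B ∧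
  (G.induce A).Connected ∧ (G.induce B).Connected ∧
  NoTreeComponent (crossSubgraph G A B)

/-- `T 0, …, T (k-1)` are `k` completely independent spanning trees of `G`. -/
def AreCISTs {V : Type*} (G : SimpleGraph V) {k : ℕ} (T : Fin k → SimpleGraph V) : Prop :=
  (∀ i, T i ≤ G ∧ (T i).IsTree) ∧
  ∀ i j, i ≠ j → ∀ u v : V, ∀ (p : (T i).Walk u v) (q : (T j).Walk u v),
    p.IsPath → q.IsPath →
      (∀ e ∈ p.edges, e ∉ q.edges) ∧
      (∀ w ∈ p.support, w ∈ q.support → w = u ∨ w = v)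

def HasKCISTs {V : Type*} (G : SimpleGraph V) (k : ℕ) : Prop :=
  ∃ T : Fin k → SimpleGraph V, AreCISTs G T

lemma SimpleGraph.Walk.reachable_induce_of_le {V : Type*} {G T : SimpleGraph V} (hle : T ≤ G)
    {s : Set V} {u w : V} (p : T.Walk u w) (hp : ∀ x ∈ p.support, x ∈ s) :
    (G.induce s).Reachable ⟨u, hp u p.start_mem_support⟩ ⟨w, hp w p.end_mem_support⟩ :=
  ⟨(p.mapLe hle).induce s (by simpa only [support_mapLe_eq_support] using hp)⟩

namespace AreCISTs

variable {V : Type*} {G : SimpleGraph V} {k : ℕ} {T : Fin k → SimpleGraph V}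

lemma exists_walk_not_mem_support (hT : AreCISTs G T) {i j : Fin k} (hij : i ≠ j) {x u w : V}
    (hu : u ≠ x) (hw : w ≠ x) : ∃ l, ∃ p : (T l).Walk u w, x ∉ p.support := by
  obtain ⟨p, hp⟩ := (hT.1 i).2.connected.preconnected.exists_isPath u w
  obtain ⟨q, hq⟩ := (hT.1 j).2.connected.preconnected.exists_isPath u w
  by_contra! h
  rcases (hT.2 i j hij u w p q hp hq).2 x (h i p) (h j q) with hx | hx
  · exact hu hx.symm
  · exact hw hx.symm

lemma preconnected_induce_compl_singleton (hT : AreCISTs G T) {i j : Fin k} (hij : i ≠ j)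
    (x : V) : (G.induce ({x}ᶜ : Set V)).Preconnected := by
  rintro ⟨u, hu⟩ ⟨w, hw⟩
  obtain ⟨l, p, hp⟩ := hT.exists_walk_not_mem_support hij hu hw
  exact p.reachable_induce_of_le (hT.1 l).1 fun y hy (hyx : y = x) => hp (hyx ▸ hy)

end AreCISTs

theorem stmt_13 {V : Type*} (G : SimpleGraph V) (v : V)
    (hcut : ¬ (G.induce (({v} : Set V)ᶜ)).Preconnected) :
    ¬ HasKCISTs G 2 := by
  rintro ⟨T, hT⟩
  exact hcut (hT.preconnected_induce_compl_singleton (i := 0) (j := 1) (by decide) v)
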